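/- arXiv:2404.16293 — 3 statements merged into one kernel-verified Lean document; each statement's English description precedes it below -/
import Mathlib

section
/- For every nonzero rational number u with u ≠ 1, the function χ defined by χ(u) = (u + u⁻¹ + β(u) − 3)/12 satisfies χ(u) = χ(u+1) + χ(u⁻¹+1), where β(a/b) = gcd(a,b)²/(ab). -/
/-!
Write `u = a / b` in lowest terms. Then `u + 1 = (a + b) / b` and `u⁻¹ + 1 = (a + b) / a` are again
in lowest terms, since `gcd (a + b) b = gcd (a + b) a = gcd a b = 1`. Hence the three values of `β`
are `1 / (a b)`, `1 / ((a + b) b)` and `1 / ((a + b) a)`, and the identity becomes an identity of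
rational functions in `a` and `b`.
-/

/-- β(u) = gcd(a,b)²/(a·b) for u = a/b in lowest terms (and β(0) = 0). -/
def betaQ (u : ℚ) : ℚ :=
  ((Int.gcd u.num (u.den : ℤ) : ℤ)^2 : ℚ) / ((u.num : ℚ) * (u.den : ℚ))

/-- χ(u) = (u + u⁻¹ + β(u) − 3)/12. -/
def chiQ (u : ℚ) : ℚ := (u + u⁻¹ + betaQ u - 3) / 12

lemma Rat.gcd_num_den (q : ℚ) : Int.gcd q.num q.den = 1 := q.reduced

lemma betaQ_eq_inv (u : ℚ) : betaQ u = ((u.num : ℚ) * u.den)⁻¹ := by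
  simp [betaQ, u.gcd_num_den]

lemma betaQ_intCast_div (n d : ℤ) :
    betaQ (n / d) = (Int.gcd n d : ℚ) ^ 2 / (n * d) := by
  obtain rfl | hd := eq_or_ne d 0
  · simp [betaQ]
  have hnum_den := Rat.num_den_mk hd (Rat.intCast_div_eq_divInt n d)
  generalize (n : ℚ) / d = q at hnum_den ⊢
  obtain ⟨c, rfl, rfl⟩ := hnum_den
  have hc : (c : ℚ) ≠ 0 := by rintro h; simp_all
  rw [betaQ_eq_inv, Int.gcd_mul_left, q.gcd_num_den]
  push_cast
  rw [Nat.cast_natAbs, Int.cast_abs, mul_one, sq_abs]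
  field_simp

lemma betaQ_intCast_div_of_gcd_eq_one {n d : ℤ} (h : Int.gcd n d = 1) :
    betaQ (n / d) = (n * d : ℚ)⁻¹ := by
  rw [betaQ_intCast_div, h]
  simp

lemma chiQ_intCast_div_add_identity {a b : ℤ} (ha : a ≠ 0) (hb : b ≠ 0) (hab : a + b ≠ 0)
    (h : Int.gcd a b = 1) :
    chiQ (a / b) = chiQ (a / b + 1) + chiQ (((a : ℚ) / b)⁻¹ + 1) := by
  have hsucc : (a / b + 1 : ℚ) = (a + b : ℤ) / b := by push_cast; field_simp
  have hinv_succ : ((a : ℚ) / b)⁻¹ + 1 = (a + b : ℤ) / a := by push_cast; field_simp; ring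
  have hgcd_succ : Int.gcd (a + b) b = 1 := by rwa [Int.gcd_add_self_left]
  have hgcd_inv_succ : Int.gcd (a + b) a = 1 := by rwa [Int.gcd_self_add_left, Int.gcd_comm]
  have hab' : (a : ℚ) + b ≠ 0 := by exact_mod_cast hab
  rw [hsucc, hinv_succ, chiQ, chiQ, chiQ, betaQ_intCast_div_of_gcd_eq_one h,
    betaQ_intCast_div_of_gcd_eq_one hgcd_succ, betaQ_intCast_div_of_gcd_eq_one hgcd_inv_succ]
  push_cast
  field_simp
  ring

theorem chiQ_add_identity_general (u : ℚ) (hu0 : u ≠ 0) :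
    chiQ u = chiQ (u + 1) + chiQ (u⁻¹ + 1) := by
  obtain rfl | hu := eq_or_ne u (-1)
  -- both arguments on the right are `0`, where `chiQ 0 = -1/4` by the conventions `0⁻¹ = 0`, `x / 0 = 0`
  · norm_num [chiQ, betaQ]
  have hnum_add_den : u.num + u.den ≠ 0 := by
    contrapose! hu
    have hnum : (u.num : ℚ) = -u.den := by exact_mod_cast eq_neg_of_add_eq_zero_left hu
    rw [← u.num_div_den, hnum, neg_div, div_self (by positivity)]
  rw [← u.num_div_den]
  exact chiQ_intCast_div_add_identity (Rat.num_ne_zero.mpr hu0) (by simp) hnum_add_den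
    u.gcd_num_den

/-- For every nonzero rational `u` with `u ≠ 1`, one has
`χ(u) = χ(u+1) + χ(u⁻¹+1)`. -/
theorem chiQ_add_identity (u : ℚ) (hu0 : u ≠ 0) (hu1 : u ≠ 1) :
    chiQ u = chiQ (u + 1) + chiQ (u⁻¹ + 1) :=
  chiQ_add_identity_general u hu0
end

section
/- Let r ≥ 1, let e₁,…,e_r be integers with each e_j ≥ 2, and define ξ_{r+1} = 0, ξ_r = 1, ξ_{j-1} = e_j·ξ_j − ξ_{j+1}. Set n = ξ₀. Then ξ₁/n < 1/(e₁ − 1), and for every 2 ≤ j ≤ r one has ξ_j/n < 1/(2e_j − 3). -/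
/-! The gaps `ξ (j - 1) - ξ j` satisfy `ξ (j - 1) - ξ j = (e j - 2) ξ j + (ξ j - ξ (j + 1))`, so
descending from `ξ r - ξ (r + 1) = 1` they stay positive: `ξ` is strictly decreasing and
nonnegative on `[0, r + 1]`. Hence `n = e₁ ξ₁ - ξ₂ > (e₁ - 1) ξ₁`, and for `j ≥ 2`, using `e_{j-1} ≥ 2`,
`n ≥ ξ_{j-2} ≥ 2 ξ_{j-1} - ξ_j = (2 e_j - 1) ξ_j - 2 ξ_{j+1} > (2 e_j - 3) ξ_j`. -/

theorem div_lt_one_div_of_mul_lt {K : Type*} [Field K] [LinearOrder K] [IsStrictOrderedRing K]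
    {a c d : K} (hd : 0 < d) (ha : 0 ≤ a) (h : d * a < c) : a / c < 1 / d := by
  have hc : 0 < c := (mul_nonneg hd.le ha).trans_lt h
  rw [div_lt_div_iff₀ hc hd]
  linarith

section HirzebruchJung

variable {r : ℕ} {e ξ : ℕ → ℤ}

theorem xi_succ_nonneg_and_lt (he : ∀ j, 1 ≤ j → j ≤ r → 2 ≤ e j)
    (hξ_top : ξ (r + 1) = 0) (hξ_r : ξ r = 1)
    (hrec : ∀ j, 1 ≤ j → j ≤ r → ξ (j - 1) = e j * ξ j - ξ (j + 1))
    {j : ℕ} (hj : j ≤ r) : 0 ≤ ξ (j + 1) ∧ ξ (j + 1) < ξ j := by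
  induction hj using Nat.decreasingInduction with
  | self => simp [hξ_top, hξ_r]
  | of_succ k hk ih =>
    obtain ⟨hnonneg, hlt⟩ := ih
    have hξk : ξ k = e (k + 1) * ξ (k + 1) - ξ (k + 2) := hrec (k + 1) (by omega) hk
    have he_mul : 2 * ξ (k + 1) ≤ e (k + 1) * ξ (k + 1) :=
      mul_le_mul_of_nonneg_right (he (k + 1) (by omega) hk) (hnonneg.trans hlt.le)
    exact ⟨hnonneg.trans hlt.le, by linarith⟩

theorem xi_strictAntiOn (he : ∀ j, 1 ≤ j → j ≤ r → 2 ≤ e j)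
    (hξ_top : ξ (r + 1) = 0) (hξ_r : ξ r = 1)
    (hrec : ∀ j, 1 ≤ j → j ≤ r → ξ (j - 1) = e j * ξ j - ξ (j + 1)) :
    StrictAntiOn ξ (Set.Iic (r + 1)) :=
  strictAntiOn_Iic_of_succ_lt fun _ hm ↦
    (xi_succ_nonneg_and_lt he hξ_top hξ_r hrec (Nat.lt_succ_iff.mp hm)).2

theorem xi_nonneg (he : ∀ j, 1 ≤ j → j ≤ r → 2 ≤ e j)
    (hξ_top : ξ (r + 1) = 0) (hξ_r : ξ r = 1)
    (hrec : ∀ j, 1 ≤ j → j ≤ r → ξ (j - 1) = e j * ξ j - ξ (j + 1))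
    {j : ℕ} (hj : j ≤ r + 1) : 0 ≤ ξ j :=
  hξ_top ▸ (xi_strictAntiOn he hξ_top hξ_r hrec).antitoneOn hj Set.self_mem_Iic hj

theorem sub_one_mul_xi_one_lt (hr : 1 ≤ r) (he : ∀ j, 1 ≤ j → j ≤ r → 2 ≤ e j)
    (hξ_top : ξ (r + 1) = 0) (hξ_r : ξ r = 1)
    (hrec : ∀ j, 1 ≤ j → j ≤ r → ξ (j - 1) = e j * ξ j - ξ (j + 1)) :
    (e 1 - 1) * ξ 1 < ξ 0 := by
  have hξ₀ : ξ 0 = e 1 * ξ 1 - ξ 2 := hrec 1 le_rfl hr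
  have hlt : ξ 2 < ξ 1 := (xi_succ_nonneg_and_lt he hξ_top hξ_r hrec hr).2
  linarith

theorem two_mul_sub_three_mul_xi_lt (he : ∀ j, 1 ≤ j → j ≤ r → 2 ≤ e j)
    (hξ_top : ξ (r + 1) = 0) (hξ_r : ξ r = 1)
    (hrec : ∀ j, 1 ≤ j → j ≤ r → ξ (j - 1) = e j * ξ j - ξ (j + 1))
    {j : ℕ} (hj₂ : 2 ≤ j) (hj : j ≤ r) : (2 * e j - 3) * ξ j < ξ 0 := by
  obtain ⟨k, rfl⟩ : ∃ k, j = k + 2 := ⟨j - 2, by omega⟩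
  have hξk₁ : ξ (k + 1) = e (k + 2) * ξ (k + 2) - ξ (k + 3) := hrec (k + 2) (by omega) hj
  have hξk : ξ k = e (k + 1) * ξ (k + 1) - ξ (k + 2) := hrec (k + 1) (by omega) (by omega)
  have hlt : ξ (k + 3) < ξ (k + 2) := (xi_succ_nonneg_and_lt he hξ_top hξ_r hrec hj).2
  calc (2 * e (k + 2) - 3) * ξ (k + 2) < 2 * ξ (k + 1) - ξ (k + 2) := by linarith
    _ ≤ e (k + 1) * ξ (k + 1) - ξ (k + 2) := by
      gcongr
      · exact xi_nonneg he hξ_top hξ_r hrec (by omega)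
      · exact he (k + 1) (by omega) (by omega)
    _ = ξ k := hξk.symm
    _ ≤ ξ 0 := (xi_strictAntiOn he hξ_top hξ_r hrec).antitoneOn
        (Set.mem_Iic.mpr (by omega)) (Set.mem_Iic.mpr (by omega)) (Nat.zero_le k)

end HirzebruchJung

/-- Let `r ≥ 1`, `e_j ≥ 2`, and `ξ` as in the Hirzebruch–Jung recursion with
`n = ξ₀`.  Then `ξ₁/n < 1/(e₁−1)` and `ξ_j/n < 1/(2e_j−3)` for `2 ≤ j ≤ r`. -/
theorem xi_coefficient_bounds (r : ℕ) (hr : 1 ≤ r) (e : ℕ → ℤ)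
    (he : ∀ j, 1 ≤ j → j ≤ r → 2 ≤ e j)
    (ξ : ℕ → ℤ) (hξ_top : ξ (r + 1) = 0) (hξ_r : ξ r = 1)
    (hrec : ∀ j, 1 ≤ j → j ≤ r → ξ (j - 1) = e j * ξ j - ξ (j + 1))
    (n : ℤ) (hn : n = ξ 0) :
    (ξ 1 : ℚ) / (n : ℚ) < 1 / ((e 1 : ℚ) - 1) ∧
    ∀ j, 2 ≤ j → j ≤ r → (ξ j : ℚ) / (n : ℚ) < 1 / (2 * (e j : ℚ) - 3) := by
  subst hn
  have hnonneg {j : ℕ} (hj : j ≤ r) : (0 : ℚ) ≤ ξ j := by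
    exact_mod_cast xi_nonneg he hξ_top hξ_r hrec (by omega)
  have he_cast {j : ℕ} (hj₁ : 1 ≤ j) (hj : j ≤ r) : (2 : ℚ) ≤ e j := by
    exact_mod_cast he j hj₁ hj
  constructor
  · refine div_lt_one_div_of_mul_lt (by linarith [he_cast le_rfl hr]) (hnonneg hr) ?_
    exact_mod_cast sub_one_mul_xi_one_lt hr he hξ_top hξ_r hrec
  · intro j hj₂ hj
    refine div_lt_one_div_of_mul_lt (by linarith [he_cast (by omega) hj]) (hnonneg hj) ?_
    exact_mod_cast two_mul_sub_three_mul_xi_lt he hξ_top hξ_r hrec hj₂ hj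
end

section
/- Let r ≥ 1, e₁,…,e_r integers with each e_k ≥ 2. Define ξ_{r+1}=0, ξ_r=1, ξ_{j-1}=e_jξ_j−ξ_{j+1}, and μ₀=0, μ₁=1, μ_{k+1}=e_kμ_k−μ_{k-1}. Set n = ξ₀, q = ξ₁. Then Σ_{k=1}^{r} 1/(μ_k·μ_{k+1}) = q/n. -/
/-!
The Wronskian `μ_{k+1} ξ_k - μ_k ξ_{k+1}` of the forward and backward solutions of the same
three-term recursion is constant; at `k = 0` it equals `ξ₀ = n`, at `k = r` it equals `μ_{r+1}`,
which is positive because `e_k ≥ 2` makes `μ` increase. Dividing by `n μ_k μ_{k+1}` gives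
`1/(μ_k μ_{k+1}) = (ξ_k/μ_k - ξ_{k+1}/μ_{k+1})/n`, and the sum telescopes to `ξ₁/(μ₁ n) = q/n`.
-/

section HirzebruchJung

variable {r : ℕ} {e μ ξ : ℕ → ℤ}

lemma nonneg_and_lt_succ_of_rec (he : ∀ j, 1 ≤ j → j ≤ r → 2 ≤ e j)
    (hμrec : ∀ k, 1 ≤ k → k ≤ r → μ (k + 1) = e k * μ k - μ (k - 1))
    (h0 : 0 ≤ μ 0) (h01 : μ 0 < μ 1) : ∀ k ≤ r, 0 ≤ μ k ∧ μ k < μ (k + 1) := by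
  intro k
  induction k with
  | zero => exact fun _ => ⟨h0, h01⟩
  | succ k ih =>
    intro hk
    obtain ⟨hnonneg, hlt⟩ := ih (by omega)
    have hrec : μ (k + 2) = e (k + 1) * μ (k + 1) - μ k := hμrec (k + 1) (by omega) hk
    have he2 := he (k + 1) (by omega) hk
    constructor <;> nlinarith

lemma pos_of_rec (he : ∀ j, 1 ≤ j → j ≤ r → 2 ≤ e j)
    (hμrec : ∀ k, 1 ≤ k → k ≤ r → μ (k + 1) = e k * μ k - μ (k - 1))
    (h0 : 0 ≤ μ 0) (h01 : μ 0 < μ 1) {k : ℕ} (hk1 : 1 ≤ k) (hkr : k ≤ r + 1) : 0 < μ k := by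
  obtain ⟨hnonneg, hlt⟩ := nonneg_and_lt_succ_of_rec he hμrec h0 h01 (k - 1) (by omega)
  rw [Nat.sub_add_cancel hk1] at hlt
  omega

lemma wronskian_eq_of_rec
    (hξrec : ∀ j, 1 ≤ j → j ≤ r → ξ (j - 1) = e j * ξ j - ξ (j + 1))
    (hμrec : ∀ k, 1 ≤ k → k ≤ r → μ (k + 1) = e k * μ k - μ (k - 1)) :
    ∀ k ≤ r, μ (k + 1) * ξ k - μ k * ξ (k + 1) = μ 1 * ξ 0 - μ 0 * ξ 1 := by
  intro k
  induction k with
  | zero => exact fun _ => rfl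
  | succ k ih =>
    intro hk
    have hμ : μ (k + 2) = e (k + 1) * μ (k + 1) - μ k := hμrec (k + 1) (by omega) hk
    have hξ : ξ k = e (k + 1) * ξ (k + 1) - ξ (k + 2) := hξrec (k + 1) (by omega) hk
    linear_combination ih (by omega) - μ (k + 1) * hξ + ξ (k + 1) * hμ

end HirzebruchJung

lemma sum_one_div_mul_succ_of_wronskian {K : Type*} [Field K] {r : ℕ} {μ ξ : ℕ → K} {n : K}
    (hn : n ≠ 0) (hμ : ∀ k, 1 ≤ k → k ≤ r + 1 → μ k ≠ 0)
    (hW : ∀ k, 1 ≤ k → k ≤ r → μ (k + 1) * ξ k - μ k * ξ (k + 1) = n) :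
    ∑ k ∈ Finset.Icc 1 r, 1 / (μ k * μ (k + 1)) = (ξ 1 / μ 1 - ξ (r + 1) / μ (r + 1)) / n := by
  have hterm : ∀ k ∈ Finset.Icc 1 r, 1 / (μ k * μ (k + 1)) =
      (-(ξ (k + 1) / μ (k + 1)) - -(ξ k / μ k)) / n := by
    intro k hk
    rw [Finset.mem_Icc] at hk
    have hk0 := hμ k hk.1 (by omega)
    have hk1 := hμ (k + 1) (by omega) (by omega)
    field_simp
    linear_combination -hW k hk.1 hk.2
  rw [Finset.sum_congr rfl hterm, ← Finset.sum_div, ← Finset.Ico_add_one_right_eq_Icc,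
    Finset.sum_Ico_sub (fun k => -(ξ k / μ k)) (by omega : 1 ≤ r + 1)]
  ring

theorem sum_inv_mu_eq_q_div_n_general (r : ℕ) (e : ℕ → ℤ)
    (he : ∀ j, 1 ≤ j → j ≤ r → 2 ≤ e j)
    (ξ : ℕ → ℤ) (hξ_top : ξ (r + 1) = 0) (hξ_r : ξ r = 1)
    (hξrec : ∀ j, 1 ≤ j → j ≤ r → ξ (j - 1) = e j * ξ j - ξ (j + 1))
    (μ : ℕ → ℤ) (hμ0 : μ 0 = 0) (hμ1 : μ 1 = 1)
    (hμrec : ∀ k, 1 ≤ k → k ≤ r → μ (k + 1) = e k * μ k - μ (k - 1))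
    (n q : ℤ) (hn : n = ξ 0) (hq : q = ξ 1) :
    ∑ k ∈ Finset.Icc 1 r, (1 : ℚ) / ((μ k : ℚ) * (μ (k + 1) : ℚ)) =
      (q : ℚ) / (n : ℚ) := by
  have hpos : ∀ k, 1 ≤ k → k ≤ r + 1 → 0 < μ k := fun k =>
    pos_of_rec he hμrec hμ0.ge (by rw [hμ0, hμ1]; norm_num)
  have hW : ∀ k ≤ r, μ (k + 1) * ξ k - μ k * ξ (k + 1) = n := by
    simpa [hμ0, hμ1, hn] using wronskian_eq_of_rec hξrec hμrec
  have hn_eq : n = μ (r + 1) := by simpa [hξ_r, hξ_top] using (hW r le_rfl).symm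
  have hsum := sum_one_div_mul_succ_of_wronskian (μ := fun k => (μ k : ℚ))
    (ξ := fun k => (ξ k : ℚ)) (n := (n : ℚ)) (r := r)
    (by rw [hn_eq]; exact_mod_cast (hpos (r + 1) (by omega) le_rfl).ne')
    (fun k hk1 hkr => by exact_mod_cast (hpos k hk1 hkr).ne')
    (fun k _ hkr => by exact_mod_cast hW k hkr)
  simpa [hξ_top, hμ1, hq] using hsum

/-- With `ξ` the backward and `μ` the forward Hirzebruch–Jung recursion,
`n = ξ₀`, `q = ξ₁`, one has `∑_{k=1}^{r} 1/(μ_k μ_{k+1}) = q/n`. -/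
theorem sum_inv_mu_eq_q_div_n (r : ℕ) (hr : 1 ≤ r) (e : ℕ → ℤ)
    (he : ∀ j, 1 ≤ j → j ≤ r → 2 ≤ e j)
    (ξ : ℕ → ℤ) (hξ_top : ξ (r + 1) = 0) (hξ_r : ξ r = 1)
    (hξrec : ∀ j, 1 ≤ j → j ≤ r → ξ (j - 1) = e j * ξ j - ξ (j + 1))
    (μ : ℕ → ℤ) (hμ0 : μ 0 = 0) (hμ1 : μ 1 = 1)
    (hμrec : ∀ k, 1 ≤ k → k ≤ r → μ (k + 1) = e k * μ k - μ (k - 1))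
    (n q : ℤ) (hn : n = ξ 0) (hq : q = ξ 1) :
    ∑ k ∈ Finset.Icc 1 r, (1 : ℚ) / ((μ k : ℚ) * (μ (k + 1) : ℚ)) =
      (q : ℚ) / (n : ℚ) :=
  sum_inv_mu_eq_q_div_n_general r e he ξ hξ_top hξ_r hξrec μ hμ0 hμ1 hμrec n q hn hq
end
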